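/- Let X be a Banach space, K ⊆ X* a convex weak*-compact set, ξ an ordinal, ε > 0, and n ∈ ℕ. If Sz(K, ε) > ξ, then Sz(K, ε/n) > ξ·n. -/

import Mathlib

/-!
Common definitions formalizing the notions of Causey, "Power type ξ-asymptotically
uniformly smooth norms": Szlenk derivations and indices, B-trees, weakly null and
weak*-null collections, the moduli ρ_ξ and δ_ξ^{w*}, the trees Γ_ξ, Γ_{ξ,n}, Γ_{ξ,∞}
with their levels and probability weights, and related quantities.
-/

noncomputable section

open Ordinal Set Metric Filter NormedSpace Pointwise
open scoped Classical ENNReal Topology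

universe u v

namespace SzlenkPaper

/-! ### B-trees of finite sequences

Finite sequences in `Λ` are modelled by `List Λ`; `s <+: t` (list prefix) is the
initial segment order `s ⪯ t`, and the proper initial segment order `s ≺ t` is
`s <+: t ∧ s ≠ t`. -/

/-- `B` is a B-tree : a set of nonempty finite sequences which, after adding the
empty sequence, is downward closed under initial segments. -/
def IsBTree {Λ : Type v} (B : Set (List Λ)) : Prop :=
  [] ∉ B ∧ ∀ t ∈ B, ∀ s : List Λ, s ≠ [] → s <+: t → s ∈ B

/-- The `≺`-maximal members of a set of finite sequences. -/
def maxMembers {Λ : Type v} (B : Set (List Λ)) : Set (List Λ) :=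
  {t | t ∈ B ∧ ¬∃ s ∈ B, t <+: s ∧ t ≠ s}

/-- `B' = B \ MAX(B)`, the derived tree. -/
def treeDeriv {Λ : Type v} (B : Set (List Λ)) : Set (List Λ) :=
  {t | t ∈ B ∧ ∃ s ∈ B, t <+: s ∧ t ≠ s}

/-- Transfinite iterates `B^ζ` of the tree derivation: `B^0 = B`,
`B^{ζ+1} = (B^ζ)'`, with intersections at limit ordinals. -/
def treeIter {Λ : Type v} (B : Set (List Λ)) (o : Ordinal.{0}) : Set (List Λ) :=
  Ordinal.limitRecOn (motive := fun _ => Set (List Λ)) o B (fun _ S => treeDeriv S)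
    (fun o' _ f => ⋂ ζ : Set.Iio o', f ζ.1 (Set.mem_Iio.mp ζ.2))

/-- `o(B) = o` : the least ordinal at which the iterated derivation of `B` is empty is `o`. -/
def hasOrder {Λ : Type v} (B : Set (List Λ)) (o : Ordinal.{0}) : Prop :=
  treeIter B o = ∅ ∧ ∀ ζ : Ordinal.{0}, ζ < o → treeIter B ζ ≠ ∅

/-- The (finite) set of initial segments `s ⪯ t` of `t` which belong to `B`. -/
def branchFinset {Λ : Type v} (B : Set (List Λ)) (t : List Λ) : Finset (List Λ) :=
  t.inits.toFinset.filter fun s => s ∈ B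

section WeakTopology

variable {X : Type u} [NormedAddCommGroup X] [NormedSpace ℝ X]

/-- The closure of a set in the weak topology of `X`. -/
def weakClosure (S : Set X) : Set X :=
  ⇑(toWeakSpace ℝ X) ⁻¹' closure (⇑(toWeakSpace ℝ X) '' S)

/-- The filter of weak neighborhoods of a point of `X`. -/
def weakNhds (x : X) : Filter X :=
  Filter.comap (⇑(toWeakSpace ℝ X)) (𝓝 (toWeakSpace ℝ X x))

/-- The closure of a set of functionals in the weak* topology of `X*`. -/
def wstarClosure (S : Set (StrongDual ℝ X)) : Set (StrongDual ℝ X) :=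
  ⇑(StrongDual.toWeakDual (𝕜 := ℝ) (E := X)) ⁻¹'
    closure (⇑(StrongDual.toWeakDual (𝕜 := ℝ) (E := X)) '' S)

/-- The filter of weak* neighborhoods of a functional in `X*`. -/
def wstarNhds (f : StrongDual ℝ X) : Filter (StrongDual ℝ X) :=
  Filter.comap (⇑(StrongDual.toWeakDual (𝕜 := ℝ) (E := X))) (𝓝 (StrongDual.toWeakDual f))

/-- A set of functionals is weak*-compact if it is compact in the weak* topology. -/
def IsWStarCompact (K : Set (StrongDual ℝ X)) : Prop :=
  IsCompact (⇑(StrongDual.toWeakDual (𝕜 := ℝ) (E := X)) '' K)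

/-! ### Szlenk derivations -/

/-- The Szlenk derivation `s_ε(K)`: the points of `K` all of whose weak*
neighborhoods `V` satisfy `diam (V ∩ K) > ε`; by convention `s_ε(K) = K` for `ε ≤ 0`. -/
def szDeriv (ε : ℝ) (K : Set (StrongDual ℝ X)) : Set (StrongDual ℝ X) :=
  if ε ≤ 0 then K else {f | f ∈ K ∧ ∀ V ∈ wstarNhds f, ε < diam (V ∩ K)}

/-- Transfinite iterates `s_ε^o(K)` of the Szlenk derivation. -/
def szIter (ε : ℝ) (K : Set (StrongDual ℝ X)) (o : Ordinal.{0}) : Set (StrongDual ℝ X) :=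
  Ordinal.limitRecOn (motive := fun _ => Set (StrongDual ℝ X)) o K (fun _ S => szDeriv ε S)
    (fun o' _ f => ⋂ ζ : Set.Iio o', f ζ.1 (Set.mem_Iio.mp ζ.2))

/-- `Sz(K) ≤ o`, i.e. for every `ε > 0` the iterated derivation is empty by stage `o`. -/
def SzLe (K : Set (StrongDual ℝ X)) (o : Ordinal.{0}) : Prop :=
  ∀ ε : ℝ, 0 < ε → szIter ε K o = ∅

/-- `Sz(K) = o`. -/
def SzEq (K : Set (StrongDual ℝ X)) (o : Ordinal.{0}) : Prop :=
  SzLe K o ∧ ∀ ζ : Ordinal.{0}, ζ < o → ∃ ε : ℝ, 0 < ε ∧ szIter ε K ζ ≠ ∅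

/-- `s_{ξ,ε}(K) = s_ε^{ω^ξ}(K)`. -/
def szIterXi (ξ : Ordinal.{0}) (ε : ℝ) (K : Set (StrongDual ℝ X)) : Set (StrongDual ℝ X) :=
  szIter ε K (omega0 ^ ξ)

/-- Iterated application `s_{ξ,ε_1} s_{ξ,ε_2} ⋯ s_{ξ,ε_n}(K)` for a list `[ε_1,…,ε_n]`. -/
def multiDeriv (ξ : Ordinal.{0}) : List ℝ → Set (StrongDual ℝ X) → Set (StrongDual ℝ X)
  | [], K => K
  | e :: l, K => szIterXi ξ e (multiDeriv ξ l K)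

/-- `Sz_ξ(K,ε)`: the least `n ∈ ℕ` such that `s_ε^{ω^ξ·n}(K) = ∅` (meaningful when
`Sz(K) ≤ ω^{ξ+1}`, in which case the least such ordinal is a natural number). -/
def szNat (ξ : Ordinal.{0}) (ε : ℝ) (K : Set (StrongDual ℝ X)) : ℕ :=
  sInf {n : ℕ | szIter ε K (omega0 ^ ξ * n) = ∅}

/-- The ξ-Szlenk power type `p_ξ(K) = limsup_{ε→0⁺} log Sz_ξ(K,ε) / |log ε|`, with
value `∞` when `Sz(K) > ω^{ξ+1}`. -/
def szPower (ξ : Ordinal.{0}) (K : Set (StrongDual ℝ X)) : ℝ≥0∞ :=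
  if SzLe K (omega0 ^ (ξ + 1)) then
    Filter.limsup (fun ε : ℝ =>
      ENNReal.ofReal (Real.log (szNat ξ ε K : ℝ) / |Real.log ε|)) (𝓝[>] (0 : ℝ))
  else ⊤

variable {Y : Type u} [NormedAddCommGroup Y] [NormedSpace ℝ Y]

/-- `A* B_{Y*}`: the image of the closed unit ball of `Y*` under the adjoint of `A`. -/
def adjBall (A : X →L[ℝ] Y) : Set (StrongDual ℝ X) :=
  (fun g : StrongDual ℝ Y => g.comp A) '' Metric.closedBall 0 1

/-- The ξ-Szlenk power type of an operator, `p_ξ(A) = p_ξ(A*B_{Y*})`. -/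
def szPowerOp (ξ : Ordinal.{0}) (A : X →L[ℝ] Y) : ℝ≥0∞ :=
  szPower ξ (adjBall A)

/-- The ξ-Szlenk power type of a Banach space, `p_ξ(X) = p_ξ(B_{X*})`. -/
def szPowerSp (ξ : Ordinal.{0}) (X : Type u) [NormedAddCommGroup X] [NormedSpace ℝ X] : ℝ≥0∞ :=
  szPower ξ (Metric.closedBall (0 : StrongDual ℝ X) 1)

end WeakTopology

section Collections

variable {X Y : Type u} [NormedAddCommGroup X] [NormedSpace ℝ X]
  [NormedAddCommGroup Y] [NormedSpace ℝ Y]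

/-- A weakly null collection `(x_t)_{t ∈ B}` : for every ordinal `ζ` and every
`t ∈ (B ∪ {∅})^{ζ+1}`, `0` belongs to the weak closure of `{x_s : s ∈ B^ζ, s⁻ = t}`. -/
def WeaklyNullColl {Λ : Type v} (B : Set (List Λ)) (g : List Λ → X) : Prop :=
  ∀ ζ : Ordinal.{0}, ∀ t ∈ treeIter (insert [] B) (ζ + 1),
    (0 : X) ∈ weakClosure {x : X | ∃ s ∈ treeIter B ζ, s ≠ [] ∧ s.dropLast = t ∧ x = g s}

/-- A weak*-null collection `(z*_t)_{t ∈ B}` in `Y*`. -/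
def WStarNullColl {Λ : Type v} (B : Set (List Λ)) (z : List Λ → StrongDual ℝ Y) : Prop :=
  ∀ ζ : Ordinal.{0}, ∀ t ∈ treeIter (insert [] B) (ζ + 1),
    (0 : StrongDual ℝ Y) ∈ wstarClosure {w : StrongDual ℝ Y | ∃ s ∈ treeIter B ζ, s ≠ [] ∧ s.dropLast = t ∧ w = z s}

/-- `co(x_s : s ⪯ t, s ∈ B)`, the convex hull of the values along the branch through `t`. -/
def branchHull {Λ : Type v} (B : Set (List Λ)) (g : List Λ → X) (t : List Λ) : Set X :=
  convexHull ℝ {x : X | ∃ s ∈ B, s <+: t ∧ x = g s}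

/-! ### Norms and moduli -/

/-- `N` is a norm on `Y`. -/
def IsNormOn (N : Y → ℝ) : Prop :=
  N 0 = 0 ∧ (∀ y : Y, y ≠ 0 → 0 < N y) ∧ (∀ (c : ℝ) (y : Y), N (c • y) = |c| * N y) ∧
    ∀ y z : Y, N (y + z) ≤ N y + N z

/-- `N` is a norm on `Y` equivalent to the given norm. -/
def IsEquivNorm (N : Y → ℝ) : Prop :=
  IsNormOn N ∧ ∃ c C : ℝ, 0 < c ∧ 0 < C ∧ ∀ y : Y, c * ‖y‖ ≤ N y ∧ N y ≤ C * ‖y‖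

/-- `N` is a `2`-equivalent norm on `Y`: `‖y‖/2 ≤ N y ≤ 2‖y‖`. -/
def IsTwoEquivNorm (N : Y → ℝ) : Prop :=
  IsNormOn N ∧ ∀ y : Y, (1 / 2) * ‖y‖ ≤ N y ∧ N y ≤ 2 * ‖y‖

/-- The dual norm on `Y*` of a norm `N` on `Y`. -/
def dualNormOf (N : Y → ℝ) (g : StrongDual ℝ Y) : ℝ :=
  sSup {r : ℝ | ∃ y : Y, N y ≤ 1 ∧ r = |g y|}

/-- The modulus `ρ_ξ(σ; A : X → (Y,N))` of ξ-asymptotic uniform smoothness of the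
operator `A`, where `Y` carries the (equivalent) norm `N`:
`sup inf {N(y + Ax) − 1 : t ∈ B, x ∈ co(x_s : s ⪯ t)}`, the supremum taken over
all `y` in the `N`-unit ball of `Y`, all B-trees `B` with `o(B) = ω^ξ`, and all
weakly null collections `(x_t)_{t ∈ B} ⊆ σ B_X`. -/
def rhoWith (ξ : Ordinal.{0}) (A : X →L[ℝ] Y) (N : Y → ℝ) (σ : ℝ) : ℝ :=
  sSup {r : ℝ | ∃ y : Y, N y ≤ 1 ∧
    ∃ (Λ : Type (max u 1)) (B : Set (List Λ)) (g : List Λ → X),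
      IsBTree B ∧ hasOrder B (omega0 ^ ξ) ∧ WeaklyNullColl B g ∧ (∀ t ∈ B, ‖g t‖ ≤ σ) ∧
      r = sInf {c : ℝ | ∃ t ∈ B, ∃ x ∈ branchHull B g t, c = N (y + A x) - 1}}

/-- `ρ_ξ(σ; A)` with the given norm of `Y`. -/
def rho (ξ : Ordinal.{0}) (A : X →L[ℝ] Y) (σ : ℝ) : ℝ :=
  rhoWith ξ A (fun y => ‖y‖) σ

/-- `A : X → (Y,N)` is ξ-asymptotically uniformly smooth with power type `p`:
`ρ_ξ(σ;A) ≤ C σ^p` for all `0 < σ ≤ 1`. -/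
def AUSWith (ξ : Ordinal.{0}) (A : X →L[ℝ] Y) (N : Y → ℝ) (p : ℝ) : Prop :=
  ∃ C : ℝ, ∀ σ : ℝ, 0 < σ → σ ≤ 1 → rhoWith ξ A N σ ≤ C * σ ^ p

/-- `A : X → (Y,N)` is ξ-asymptotically uniformly smooth with power type `∞`. -/
def AUSInfWith (ξ : Ordinal.{0}) (A : X →L[ℝ] Y) (N : Y → ℝ) : Prop :=
  ∃ C : ℝ, ∀ (y : Y) (b : ℝ), 0 < b →
    ∀ (Λ : Type (max u 1)) (B : Set (List Λ)) (g : List Λ → X),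
      IsBTree B → hasOrder B (omega0 ^ ξ) → WeaklyNullColl B g → (∀ t ∈ B, ‖g t‖ ≤ b) →
      sInf {c : ℝ | ∃ t ∈ B, ∃ x ∈ branchHull B g t, c = N (y + A x)} ≤ max (N y) (C * b)

/-- The set of constants `C > 0` witnessing the quantity `t_{ξ,p}(A)`: for every
`y ∈ Y`, `σ > 0`, every B-tree `B` with `o(B) = ω^ξ` and every weakly null
`(x_t)_{t∈B} ⊆ σ B_X`, `inf {‖y + Ax‖^p} ≤ ‖y‖^p + C σ^p`.  `t_{ξ,p}(A)` itself is
the infimum of this set. -/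
def tConstSet (ξ : Ordinal.{0}) (A : X →L[ℝ] Y) (p : ℝ) : Set ℝ :=
  {C : ℝ | 0 < C ∧ ∀ (y : Y) (σ : ℝ), 0 < σ →
    ∀ (Λ : Type (max u 1)) (B : Set (List Λ)) (g : List Λ → X),
      IsBTree B → hasOrder B (omega0 ^ ξ) → WeaklyNullColl B g → (∀ t ∈ B, ‖g t‖ ≤ σ) →
      sInf {c : ℝ | ∃ t ∈ B, ∃ x ∈ branchHull B g t, c = ‖y + A x‖ ^ p} ≤ ‖y‖ ^ p + C * σ ^ p}

/-- The set of constants `C > 0` witnessing `t_{ξ,∞}(A)`: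
`inf {‖y + Ax‖} ≤ max {‖y‖, C σ}` under the same quantification. -/
def tInfConstSet (ξ : Ordinal.{0}) (A : X →L[ℝ] Y) : Set ℝ :=
  {C : ℝ | 0 < C ∧ ∀ (y : Y) (σ : ℝ), 0 < σ →
    ∀ (Λ : Type (max u 1)) (B : Set (List Λ)) (g : List Λ → X),
      IsBTree B → hasOrder B (omega0 ^ ξ) → WeaklyNullColl B g → (∀ t ∈ B, ‖g t‖ ≤ σ) →
      sInf {c : ℝ | ∃ t ∈ B, ∃ x ∈ branchHull B g t, c = ‖y + A x‖} ≤ max ‖y‖ (C * σ)}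

/-- Modulus `δ^{w*}_ξ(τ; A* : (Y,N)* → X*)` of weak*-ξ-asymptotic uniform convexity
of the adjoint `A*`, with `Y` renormed by `N`: the infimum over `y*` of `N`-dual-norm `1`,
B-trees `B` with `o(B) = ω^ξ`, and weak*-null `(A*,τ)`-large collections `(z*_s)_{s∈B}`
of `sup {N*(y* + Σ_{s ⪯ t} z*_s) − 1 : t ∈ B}`. -/
def deltaWith (ξ : Ordinal.{0}) (A : X →L[ℝ] Y) (N : Y → ℝ) (τ : ℝ) : ℝ :=
  sInf {r : ℝ | ∃ g : StrongDual ℝ Y, dualNormOf N g = 1 ∧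
    ∃ (Λ : Type (max u 1)) (B : Set (List Λ)) (z : List Λ → StrongDual ℝ Y),
      IsBTree B ∧ hasOrder B (omega0 ^ ξ) ∧ WStarNullColl B z ∧
      (∀ s ∈ B, τ < ‖(z s).comp A‖) ∧
      r = sSup {c : ℝ | ∃ t ∈ B, c = dualNormOf N (g + ∑ s ∈ branchFinset B t, z s) - 1}}

/-- `δ^{w*}_ξ(τ; A*)` with the original norm of `Y`. -/
def deltaOp (ξ : Ordinal.{0}) (A : X →L[ℝ] Y) (τ : ℝ) : ℝ :=
  sInf {r : ℝ | ∃ g : StrongDual ℝ Y, ‖g‖ = 1 ∧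
    ∃ (Λ : Type (max u 1)) (B : Set (List Λ)) (z : List Λ → StrongDual ℝ Y),
      IsBTree B ∧ hasOrder B (omega0 ^ ξ) ∧ WStarNullColl B z ∧
      (∀ s ∈ B, τ < ‖(z s).comp A‖) ∧
      r = sSup {c : ℝ | ∃ t ∈ B, c = ‖g + ∑ s ∈ branchFinset B t, z s‖ - 1}}

/-- `A* : (Y,N)* → X*` is weak*-ξ-asymptotically uniformly convex with power type `p`:
`δ^{w*}_ξ(τ;A*) ≥ c τ^p` for all `0 < τ ≤ 1`. -/
def AUCWith (ξ : Ordinal.{0}) (A : X →L[ℝ] Y) (N : Y → ℝ) (p : ℝ) : Prop :=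
  ∃ c : ℝ, 0 < c ∧ ∀ τ : ℝ, 0 < τ → τ ≤ 1 → c * τ ^ p ≤ deltaWith ξ A N τ

/-! ### Space (identity operator) versions, for a renorming `N` of `X` itself. -/

/-- The modulus `ρ_ξ(σ)` of the norm `N` on `X`. -/
def rhoSpace (ξ : Ordinal.{0}) (N : X → ℝ) (σ : ℝ) : ℝ :=
  sSup {r : ℝ | ∃ y : X, N y ≤ 1 ∧
    ∃ (Λ : Type (max u 1)) (B : Set (List Λ)) (g : List Λ → X),
      IsBTree B ∧ hasOrder B (omega0 ^ ξ) ∧ WeaklyNullColl B g ∧ (∀ t ∈ B, N (g t) ≤ σ) ∧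
      r = sInf {c : ℝ | ∃ t ∈ B, ∃ x ∈ branchHull B g t, c = N (y + x) - 1}}

/-- The norm `N` on `X` is ξ-asymptotically uniformly smooth with power type `p`. -/
def AUSSpace (ξ : Ordinal.{0}) (N : X → ℝ) (p : ℝ) : Prop :=
  ∃ C : ℝ, ∀ σ : ℝ, 0 < σ → σ ≤ 1 → rhoSpace ξ N σ ≤ C * σ ^ p

/-- The modulus `δ^{w*}_ξ(τ)` of the dual norm of `N` on `X*`. -/
def deltaSpace (ξ : Ordinal.{0}) (N : X → ℝ) (τ : ℝ) : ℝ :=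
  sInf {r : ℝ | ∃ g : StrongDual ℝ X, dualNormOf N g = 1 ∧
    ∃ (Λ : Type (max u 1)) (B : Set (List Λ)) (z : List Λ → StrongDual ℝ X),
      IsBTree B ∧ hasOrder B (omega0 ^ ξ) ∧ WStarNullColl B z ∧
      (∀ s ∈ B, τ < dualNormOf N (z s)) ∧
      r = sSup {c : ℝ | ∃ t ∈ B, c = dualNormOf N (g + ∑ s ∈ branchFinset B t, z s) - 1}}

/-- The dual norm of `N` on `X*` is weak*-ξ-asymptotically uniformly convex with
power type `p`. -/
def AUCSpace (ξ : Ordinal.{0}) (N : X → ℝ) (p : ℝ) : Prop :=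
  ∃ c : ℝ, 0 < c ∧ ∀ τ : ℝ, 0 < τ → τ ≤ 1 → c * τ ^ p ≤ deltaSpace ξ N τ

end Collections

/-! ### The trees `Γ_ξ`, `Γ_{ξ,n}`, `Γ_{ξ,∞}`, their levels, and the weights `ℙ_ξ`. -/

/-- `ζ + S`: shift every entry of every sequence in `S` by `ζ`. -/
def shiftSet (ζ : Ordinal.{0}) (S : Set (List Ordinal.{0})) : Set (List Ordinal.{0}) :=
  (fun t => t.map fun a => ζ + a) '' S

/-- `gammaStep ξ G n = Γ_{ξ,n+1}` built from `G = Γ_ξ`: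
`Γ_{ξ,1} = Γ_ξ` and `Γ_{ξ,n+1} = (ω^ξ·n + Γ_ξ) ∪ {t ⌢ u : t ∈ MAX(ω^ξ·n + Γ_ξ), u ∈ Γ_{ξ,n}}`. -/
def gammaStep (ξ : Ordinal.{0}) (G : Set (List Ordinal.{0})) : ℕ → Set (List Ordinal.{0})
  | 0 => G
  | n + 1 =>
    shiftSet (omega0 ^ ξ * ((n : Ordinal.{0}) + 1)) G ∪
      {w | ∃ t ∈ maxMembers (shiftSet (omega0 ^ ξ * ((n : Ordinal.{0}) + 1)) G),
        ∃ u ∈ gammaStep ξ G n, w = t ++ u}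

/-- The B-trees `Γ_ξ`: `Γ_0 = {(0)}`, `Γ_{ξ+1} = ⋃_n Γ_{ξ,n}`, and at limit `ξ`,
`Γ_ξ = ⋃_{ζ<ξ} (ω^ζ + Γ_{ζ+1})`. -/
def Gamma (ξ : Ordinal.{0}) : Set (List Ordinal.{0}) :=
  Ordinal.limitRecOn (motive := fun _ => Set (List Ordinal.{0})) ξ
    {[(0 : Ordinal.{0})]}
    (fun ζ G => ⋃ n : ℕ, gammaStep ζ G n)
    (fun _ hξ f => ⋃ η : Set.Iio _,
      shiftSet (omega0 ^ (η.1 : Ordinal.{0}))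
        (f (Order.succ η.1) (hξ.succ_lt (Set.mem_Iio.mp η.2))))

/-- `Γ_{ξ,n}` for `n ≥ 1` (junk value `Γ_ξ` for `n = 0`). -/
def GammaN (ξ : Ordinal.{0}) (n : ℕ) : Set (List Ordinal.{0}) :=
  gammaStep ξ (Gamma ξ) (n - 1)

/-- The level `Λ_{ξ,n,m}` of `Γ_{ξ,n}`: sequences of the form
`(ω^ξ(n−1)+t_1) ⌢ … ⌢ (ω^ξ(n−m)+t_m)` with `t_i ∈ Γ_ξ` nonempty and
`t_1, …, t_{m−1}` maximal in `Γ_ξ`. -/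
def levelN (ξ : Ordinal.{0}) (n m : ℕ) : Set (List Ordinal.{0}) :=
  {w | ∃ ts : Fin m → List Ordinal.{0},
    (∀ i, ts i ∈ Gamma ξ ∧ ts i ≠ []) ∧
    (∀ i : Fin m, (i : ℕ) + 1 < m → ts i ∈ maxMembers (Gamma ξ)) ∧
    w = (List.ofFn fun i : Fin m =>
      (ts i).map fun a => omega0 ^ ξ * ((n - 1 - (i : ℕ) : ℕ) : Ordinal.{0}) + a).flatten}

/-- The level `Λ_{ξ,∞,m}` of `Γ_{ξ,∞}`: sequences
`t_1 ⌢ (ω^ξ + t_2) ⌢ … ⌢ (ω^ξ(m−1) + t_m)` with `t_i ∈ Γ_ξ` nonempty and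
`t_1, …, t_{m−1}` maximal in `Γ_ξ`. -/
def levelInf (ξ : Ordinal.{0}) (m : ℕ) : Set (List Ordinal.{0}) :=
  {w | ∃ ts : Fin m → List Ordinal.{0},
    (∀ i, ts i ∈ Gamma ξ ∧ ts i ≠ []) ∧
    (∀ i : Fin m, (i : ℕ) + 1 < m → ts i ∈ maxMembers (Gamma ξ)) ∧
    w = (List.ofFn fun i : Fin m =>
      (ts i).map fun a => omega0 ^ ξ * ((i : ℕ) : Ordinal.{0}) + a).flatten}

/-- `Γ_{ξ,∞} = ⋃_{m ≥ 1} Λ_{ξ,∞,m}`. -/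
def GammaInf (ξ : Ordinal.{0}) : Set (List Ordinal.{0}) :=
  ⋃ m : ℕ, levelInf ξ (m + 1)

/-- The unit-wise identification `ι` sending a member of `Γ_{ξ,n}` (or `Γ_{ξ,∞}`)
to the member of `Γ_ξ` obtained by unshifting its last unit: the last block of
entries lying in the same `ω^ξ`-range as the final entry, unshifted. -/
def iota (ξ : Ordinal.{0}) (t : List Ordinal.{0}) : List Ordinal.{0} :=
  match t.getLast? with
  | none => []
  | some o =>
    ((t.reverse.takeWhile fun a => decide (a / omega0 ^ ξ = o / omega0 ^ ξ)).reverse).map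
      fun a => a - omega0 ^ ξ * (o / omega0 ^ ξ)

/-- The weights `ℙ_ξ : Γ_ξ → [0,1]`: `ℙ_0 ≡ 1`; `ℙ_{ξ+1}(t) = (1/n) ℙ_ξ(ι_{ξ,n}(t))`
for `t ∈ Γ_{ξ,n}` (here `n` is recovered from the first entry of `t`); at limit `ξ`,
`ℙ_ξ(t) = ℙ_{ζ+1}(t − ω^ζ)` where `t ∈ ω^ζ + Γ_{ζ+1}`, `ζ = log_ω(first entry)`. -/
def Pweight (ξ : Ordinal.{0}) : List Ordinal.{0} → ℝ :=
  Ordinal.limitRecOn (motive := fun _ => List Ordinal.{0} → ℝ) ξ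
    (fun _ => 1)
    (fun ζ Pz t =>
      (((t.headI / omega0 ^ ζ).card.toNat : ℝ) + 1)⁻¹ * Pz (iota ζ t))
    (fun ξ' _ f t =>
      if h : Order.succ (Ordinal.log omega0 t.headI) < ξ' then
        f (Order.succ (Ordinal.log omega0 t.headI)) h
          (t.map fun a => a - omega0 ^ Ordinal.log omega0 t.headI)
      else 0)

section OmegaTrees

variable {X Y : Type u} [NormedAddCommGroup X] [NormedSpace ℝ X]
  [NormedAddCommGroup Y] [NormedSpace ℝ Y]

/-- `D` is a weak neighborhood basis at `0` in `X`, directed by reverse inclusion. -/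
def IsWeakNhdBasis (D : Set (Set X)) : Prop :=
  (∀ U ∈ D, U ∈ weakNhds (0 : X)) ∧ (∀ V ∈ weakNhds (0 : X), ∃ U ∈ D, U ⊆ V) ∧
    ∀ U ∈ D, ∀ V ∈ D, ∃ W ∈ D, W ⊆ U ∩ V

/-- `G·D`: the tree of sequences of pairs whose ordinal coordinates form a member
of `G` and whose second coordinates belong to `D`.  For `G = Γ_ξ` this is `Ω_ξ`,
for `G = Γ_{ξ,n}` it is `Ω_{ξ,n}`, etc. -/
def OmegaOf (D : Set (Set X)) (G : Set (List Ordinal.{0})) :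
    Set (List (Ordinal.{0} × Set X)) :=
  {w | w.map Prod.fst ∈ G ∧ ∀ p ∈ w, p.2 ∈ D}

/-- A collection `(x_t)_{t ∈ Ω}` is normally weakly null: `x_t ∈ U` whenever
`t = t₁ ⌢ (ζ, U)`. -/
def NormallyWNull (Ω : Set (List (Ordinal.{0} × Set X)))
    (g : List (Ordinal.{0} × Set X) → X) : Prop :=
  ∀ w ∈ Ω, ∀ (w₁ : List (Ordinal.{0} × Set X)) (ζ : Ordinal.{0}) (U : Set X),
    w = w₁ ++ [(ζ, U)] → g w ∈ U

/-- The weight `ℙ_ξ(ι_ξ(s))` of a node of an `Ω`-tree (the `D`-coordinates are ignored). -/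
def PweightIota (ξ : Ordinal.{0}) (s : List (Ordinal.{0} × Set X)) : ℝ :=
  Pweight ξ (iota ξ (s.map Prod.fst))

/-- The full special convex combination `Σ_{s ⪯ t, s ∈ Ω} ℙ_ξ(ι_ξ(s)) x_s` along the
branch through `t` (equal to `Σ_i z_i^t` for the special convex blocks `z_i^t`). -/
def branchComb (ξ : Ordinal.{0}) (Ω : Set (List (Ordinal.{0} × Set X)))
    (g : List (Ordinal.{0} × Set X) → X) (t : List (Ordinal.{0} × Set X)) : X :=
  ∑ s ∈ t.inits.toFinset.filter (fun s => s ∈ Ω), PweightIota ξ s • g s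

/-- The special convex block `z_m^t` of `(x_s)` lying on level `m`:
`z_m^t = Σ_{s ⪯ t, s ∈ Λ_{ξ,n,m}} ℙ_ξ(ι_{ξ,n}(s)) x_s`. -/
def levelBlock (ξ : Ordinal.{0}) (n m : ℕ)
    (g : List (Ordinal.{0} × Set X) → X) (t : List (Ordinal.{0} × Set X)) : X :=
  ∑ s ∈ t.inits.toFinset.filter (fun s => s.map Prod.fst ∈ levelN ξ n m),
    PweightIota ξ s • g s

/-- The convex block of `(x_s)` along the branch-segment `t ≺ s ⪯ t'` inside `Ω`. -/
def chainBlock (ξ : Ordinal.{0}) (Ω : Set (List (Ordinal.{0} × Set X)))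
    (g : List (Ordinal.{0} × Set X) → X) (t t' : List (Ordinal.{0} × Set X)) : X :=
  ∑ s ∈ t'.inits.toFinset.filter (fun s => s ∈ Ω ∧ t <+: s ∧ s ≠ t),
    PweightIota ξ s • g s

/-- The property defining `N_ξ(σ; A)` (relative to the weak neighborhood basis `D`):
there is a normally weakly null collection `(x_t)_{t ∈ Ω_{ξ,N+1}} ⊆ σ B_X` with
`‖Σ_{i=1}^{N+1} A z_i^t‖ > 1` for every maximal `t`.  `N_ξ(σ;A)` is the least `N`
with this property. -/
def NxiProp (ξ : Ordinal.{0}) (A : X →L[ℝ] Y) (D : Set (Set X)) (σ : ℝ) (N : ℕ) : Prop :=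
  ∃ g : List (Ordinal.{0} × Set X) → X,
    NormallyWNull (OmegaOf D (GammaN ξ (N + 1))) g ∧
    (∀ t ∈ OmegaOf D (GammaN ξ (N + 1)), ‖g t‖ ≤ σ) ∧
    ∀ t ∈ maxMembers (OmegaOf D (GammaN ξ (N + 1))),
      1 < ‖A (branchComb ξ (OmegaOf D (GammaN ξ (N + 1))) g t)‖

/-- `(u_n)` is `C`-dominated by the unit vector basis of `ℓ_p`. -/
def DominatedLp (u : ℕ → Y) (p C : ℝ) : Prop :=
  ∀ (m : ℕ) (a : ℕ → ℝ),
    ‖∑ n ∈ Finset.range m, a n • u n‖ ≤ C * (∑ n ∈ Finset.range m, |a n| ^ p) ^ (1 / p)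

/-- `(u_n)` is `C`-dominated by the unit vector basis of `c₀`. -/
def DominatedC0 (u : ℕ → Y) (C : ℝ) : Prop :=
  ∀ (m : ℕ) (a : ℕ → ℝ) (b : ℝ), (∀ n ∈ Finset.range m, |a n| ≤ b) →
    ‖∑ n ∈ Finset.range m, a n • u n‖ ≤ C * b

/-- `A` satisfies ξ-`ℓ_p` upper tree estimates: every normally weakly null collection
indexed by `Ω_{ξ,∞}` in `B_X` admits a chain `∅ = t_0 ≺ t_1 ≺ ⋯` through the levels
such that the images under `A` of the special convex blocks are dominated by the unit
vector basis of `ℓ_p`. -/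
def UpperTreeEst (ξ : Ordinal.{0}) (A : X →L[ℝ] Y) (p : ℝ) : Prop :=
  ∀ D : Set (Set X), IsWeakNhdBasis D →
    ∀ g : List (Ordinal.{0} × Set X) → X,
      NormallyWNull (OmegaOf D (GammaInf ξ)) g →
      (∀ t ∈ OmegaOf D (GammaInf ξ), ‖g t‖ ≤ 1) →
      ∃ ts : ℕ → List (Ordinal.{0} × Set X), ts 0 = [] ∧
        (∀ n : ℕ, ts n <+: ts (n + 1) ∧ ts n ≠ ts (n + 1)) ∧
        (∀ n : ℕ, ts (n + 1) ∈ maxMembers (OmegaOf D (levelInf ξ (n + 1)))) ∧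
        ∃ C : ℝ, DominatedLp
          (fun n => A (chainBlock ξ (OmegaOf D (GammaInf ξ)) g (ts n) (ts (n + 1)))) p C

end OmegaTrees

/-! ### ε-largeness of functions on `Γ_ξ` -/

/-- A function `f : Γ_ξ → ℝ` is ε-large: for every `δ > 0` there is a monotone
`θ : Γ_ξ → Γ_ξ` with `f(θ(t)) ≥ ε − δ` for all `t ∈ Γ_ξ`. -/
def IsLarge (ξ : Ordinal.{0}) (f : List Ordinal.{0} → ℝ) (ε : ℝ) : Prop :=
  ∀ δ : ℝ, 0 < δ → ∃ θ : List Ordinal.{0} → List Ordinal.{0},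
    Set.MapsTo θ (Gamma ξ) (Gamma ξ) ∧
    (∀ s t : List Ordinal.{0}, s ∈ Gamma ξ → t ∈ Gamma ξ → s <+: t → s ≠ t →
      θ s <+: θ t ∧ θ s ≠ θ t) ∧
    ∀ t ∈ Gamma ξ, ε - δ ≤ f (θ t)

/-!
The map `u ↦ a • u + v` (`a > 0`) is a weak*-homeomorphism of `X*` that multiplies distances
by `a`, so it carries `s_ε^ζ(K)` into `s_{aε}^ζ` of any bounded set containing the image of `K`.
For convex bounded `K` and `c = 1/n`, the image of `K` under `u ↦ c • u + v` lies in
`s_{cε}^{ξk}(K)` whenever `v ∈ kc • s_ε^ξ(K) + (1 - (k+1)c) • K`; hence, by induction on `k`,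
`kc • s_ε^ξ(K) + (1 - kc) • K ⊆ s_{cε}^{ξk}(K)`. At `k = n` the left side contains `s_ε^ξ(K)`.
-/

theorem exists_lt_dist_of_lt_diam {α : Type*} [PseudoMetricSpace α] {s : Set α} {r : ℝ}
    (hr : 0 ≤ r) (h : r < diam s) : ∃ u ∈ s, ∃ u' ∈ s, r < dist u u' := by
  by_contra! hc
  exact (diam_le_of_forall_dist_le hr hc).not_gt h

section SzlenkDerivation

variable {X : Type u} [NormedAddCommGroup X] [NormedSpace ℝ X]

theorem IsWStarCompact.isBounded [CompleteSpace X] {K : Set (StrongDual ℝ X)}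
    (hK : IsWStarCompact K) : Bornology.IsBounded K := by
  have hpointwise : ∀ x : X, ∃ C, ∀ f : K, ‖(f : StrongDual ℝ X) x‖ ≤ C := by
    intro x
    obtain ⟨C, hC⟩ := isBounded_iff_forall_norm_le.mp
      (hK.image (WeakDual.eval_continuous x)).isBounded
    exact ⟨C, fun f => hC _ ⟨_, ⟨f.1, f.2, rfl⟩, rfl⟩⟩
  obtain ⟨C, hC⟩ := banach_steinhaus (g := fun f : K => (f : StrongDual ℝ X)) hpointwise
  exact isBounded_iff_forall_norm_le.mpr ⟨C, fun f hf => hC ⟨f, hf⟩⟩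

theorem tendsto_affine_wstarNhds (a : ℝ) (v x : StrongDual ℝ X) :
    Tendsto (fun u => a • u + v) (wstarNhds x) (wstarNhds (a • x + v)) := by
  unfold wstarNhds
  rw [tendsto_comap_iff]
  have hcont : Continuous fun g : WeakDual ℝ X => a • g + StrongDual.toWeakDual v := by
    fun_prop
  simpa [Function.comp_def] using
    (hcont.tendsto (StrongDual.toWeakDual x)).comp tendsto_comap

theorem szDeriv_of_nonpos {ε : ℝ} (hε : ε ≤ 0) (S : Set (StrongDual ℝ X)) :
    szDeriv ε S = S :=
  if_pos hε

theorem szDeriv_subset (ε : ℝ) (S : Set (StrongDual ℝ X)) : szDeriv ε S ⊆ S := by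
  unfold szDeriv
  split
  · exact subset_rfl
  · exact fun f hf => hf.1

theorem image_szDeriv_subset {S T : Set (StrongDual ℝ X)} (hT : Bornology.IsBounded T)
    {a : ℝ} (ha : 0 < a) (v : StrongDual ℝ X) (ε : ℝ)
    (hST : (fun u => a • u + v) '' S ⊆ T) :
    (fun u => a • u + v) '' szDeriv ε S ⊆ szDeriv (a * ε) T := by
  rcases le_or_gt ε 0 with hε | hε
  · rwa [szDeriv_of_nonpos hε, szDeriv_of_nonpos (by nlinarith)]
  rintro _ ⟨x, hx, rfl⟩
  simp only [szDeriv, if_neg hε.not_ge, if_neg (mul_pos ha hε).not_ge] at hx ⊢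
  refine ⟨hST ⟨x, hx.1, rfl⟩, fun V hV => ?_⟩
  obtain ⟨u, hu, u', hu', hεu⟩ := exists_lt_dist_of_lt_diam hε.le
    (hx.2 _ (tendsto_affine_wstarNhds a v x hV))
  calc a * ε < a * dist u u' := mul_lt_mul_of_pos_left hεu ha
    _ = dist (a • u + v) (a • u' + v) := by
      rw [dist_add_right, dist_smul₀ a u u', Real.norm_of_nonneg ha.le]
    _ ≤ diam (V ∩ T) :=
      dist_le_diam_of_mem (hT.subset inter_subset_right)
        ⟨hu.1, hST ⟨u, hu.2, rfl⟩⟩ ⟨hu'.1, hST ⟨u', hu'.2, rfl⟩⟩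

theorem szIter_zero (ε : ℝ) (K : Set (StrongDual ℝ X)) : szIter ε K 0 = K :=
  Ordinal.limitRecOn_zero _ _ _

theorem szIter_add_one (ε : ℝ) (K : Set (StrongDual ℝ X)) (o : Ordinal.{0}) :
    szIter ε K (o + 1) = szDeriv ε (szIter ε K o) :=
  Ordinal.limitRecOn_add_one _ _ _ _

theorem szIter_limit (ε : ℝ) (K : Set (StrongDual ℝ X)) {o : Ordinal.{0}}
    (ho : Order.IsSuccLimit o) : szIter ε K o = ⋂ ζ : Iio o, szIter ε K ζ :=
  Ordinal.limitRecOn_limit _ _ _ _ ho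

theorem szIter_antitone (ε : ℝ) (K : Set (StrongDual ℝ X)) : Antitone (szIter ε K) := by
  intro a b hab
  induction b using Ordinal.limitRecOn with
  | zero => rw [nonpos_iff_eq_zero.mp hab]
  | add_one b ih =>
    rcases Order.le_succ_iff_eq_or_le.mp (Order.succ_eq_add_one b ▸ hab) with h | h
    · rw [h, Order.succ_eq_add_one]
    · rw [szIter_add_one]
      exact (szDeriv_subset _ _).trans (ih h)
  | limit b hb _ =>
    rcases hab.lt_or_eq with h | rfl
    · rw [szIter_limit ε K hb]
      exact iInter_subset _ (⟨a, h⟩ : Iio b)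
    · rfl

theorem szIter_subset (ε : ℝ) (K : Set (StrongDual ℝ X)) (o : Ordinal.{0}) :
    szIter ε K o ⊆ K :=
  by simpa only [szIter_zero] using szIter_antitone ε K (zero_le : 0 ≤ o)

theorem szIter_add (ε : ℝ) (K : Set (StrongDual ℝ X)) (a b : Ordinal.{0}) :
    szIter ε K (a + b) = szIter ε (szIter ε K a) b := by
  induction b using Ordinal.limitRecOn with
  | zero => rw [add_zero, szIter_zero]
  | add_one b ih =>
    rw [← add_assoc, szIter_add_one, szIter_add_one, ih]
  | limit b hb ih =>
    rw [szIter_limit ε _ hb, szIter_limit ε K (Ordinal.isSuccLimit_add a hb)]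
    refine subset_antisymm (subset_iInter fun η => ?_) (subset_iInter fun ζ => ?_)
    · rw [← ih η η.2]
      exact iInter_subset _ (⟨a + η, (add_lt_add_iff_left a).mpr η.2⟩ : Iio (a + b))
    · have hη : (ζ : Ordinal) - a < b := Ordinal.sub_lt_of_lt_add ζ.2 hb.pos
      refine (iInter_subset _ (⟨_, hη⟩ : Iio b)).trans ?_
      rw [← ih _ hη]
      exact szIter_antitone ε K (Ordinal.le_add_sub ζ a)

theorem image_szIter_subset {K T : Set (StrongDual ℝ X)} (hT : Bornology.IsBounded T)
    {a : ℝ} (ha : 0 < a) (v : StrongDual ℝ X) (ε : ℝ)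
    (hKT : (fun u => a • u + v) '' K ⊆ T) (o : Ordinal.{0}) :
    (fun u => a • u + v) '' szIter ε K o ⊆ szIter (a * ε) T o := by
  induction o using Ordinal.limitRecOn with
  | zero => rwa [szIter_zero, szIter_zero]
  | add_one o ih =>
    rw [szIter_add_one, szIter_add_one]
    exact image_szDeriv_subset (hT.subset (szIter_subset _ _ _)) ha v ε ih
  | limit o ho ih =>
    rw [szIter_limit ε K ho, szIter_limit _ T ho]
    exact (image_iInter_subset _ _).trans (iInter_mono fun ζ => ih ζ ζ.2)

theorem smul_szIter_add_smul_subset {K : Set (StrongDual ℝ X)} (hK : Bornology.IsBounded K)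
    (hconv : Convex ℝ K) {c : ℝ} (hc : 0 < c) (ε : ℝ) (ξ : Ordinal.{0}) (k : ℕ)
    (hk : k * c ≤ 1) :
    (k * c) • szIter ε K ξ + (1 - k * c) • K ⊆ szIter (c * ε) K (ξ * k) := by
  induction k with
  | zero =>
    simp only [CharP.cast_eq_zero, zero_mul, _root_.sub_zero, one_smul, mul_zero, szIter_zero]
    exact (add_subset_add_right (zero_smul_set_subset _)).trans (zero_add K).subset
  | succ k ih =>
    push_cast at hk ⊢
    rintro _ ⟨_, ⟨x, hx, rfl⟩, _, ⟨w, hw, rfl⟩, rfl⟩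
    set v := (k * c) • x + (1 - (k + 1) * c) • w
    have hKT : (fun u => c • u + v) '' K ⊆ szIter (c * ε) K (ξ * k) := by
      rintro _ ⟨u, hu, rfl⟩
      refine ih (by linarith) ⟨_, smul_mem_smul_set hx, (1 - (k + 1) * c) • w + c • u, ?_,
        by simp only [v]; abel⟩
      rw [show 1 - k * c = (1 - (k + 1) * c) + c by ring, hconv.add_smul (by linarith) hc.le]
      exact add_mem_add (smul_mem_smul_set hw) (smul_mem_smul_set hu)
    have hx' := image_szIter_subset (hK.subset (szIter_subset _ _ _)) hc v ε hKT ξ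
      (mem_image_of_mem _ hx)
    rw [← szIter_add, ← mul_add_one] at hx'
    convert hx' using 1
    simp only [v]
    module

end SzlenkDerivation

theorem statement12_general {X : Type u}
    [NormedAddCommGroup X] [NormedSpace ℝ X] [CompleteSpace X]
    (K : Set (StrongDual ℝ X)) (hK : IsWStarCompact K) (hconv : Convex ℝ K)
    (ξ : Ordinal.{0}) (ε : ℝ) (n : ℕ)
    (h : (szIter ε K ξ).Nonempty) :
    (szIter (ε / n) K (ξ * n)).Nonempty := by
  obtain ⟨x, hx⟩ := h
  have hxK : x ∈ K := szIter_subset ε K ξ hx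
  obtain rfl | hn := n.eq_zero_or_pos
  · exact ⟨x, by simpa [szIter_zero] using hxK⟩
  have hn' : (n : ℝ) ≠ 0 := by positivity
  have key := smul_szIter_add_smul_subset hK.isBounded hconv (inv_pos.mpr (by positivity)) ε ξ n
    (mul_inv_cancel₀ hn').le
  rw [mul_inv_cancel₀ hn', _root_.sub_self, one_smul, ← div_eq_inv_mul] at key
  exact ⟨x, key ⟨x, hx, 0, ⟨x, hxK, zero_smul ℝ x⟩, add_zero x⟩⟩

/-- Let `X` be a Banach space, `K ⊆ X*` a convex weak*-compact set,
`ξ` an ordinal, `ε > 0`, and `n ∈ ℕ`.  If `Sz(K,ε) > ξ`, then `Sz(K, ε/n) > ξ·n`. -/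
theorem statement12 {X : Type u}
    [NormedAddCommGroup X] [NormedSpace ℝ X] [CompleteSpace X]
    (K : Set (StrongDual ℝ X)) (hK : IsWStarCompact K) (hconv : Convex ℝ K)
    (ξ : Ordinal.{0}) (ε : ℝ) (hε : 0 < ε) (n : ℕ) (hn : 0 < n)
    (h : (szIter ε K ξ).Nonempty) :
    (szIter (ε / n) K (ξ * n)).Nonempty :=
  statement12_general K hK hconv ξ ε n h

end SzlenkPaper
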